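/- arXiv:2206.13975 — 4 statements merged into one kernel-verified Lean document; each statement's English description precedes it below -/
import Mathlib

section
/- For n ≥ 2 and p a prime with p ≥ n+1, let c ∈ {1,...,p-1} and σ ∈ S_n. Define the (n-1)×n matrix M by M_{1,j} = 0, M_{2,j} = c·σ(j), and M_{i,j} = (n+1-j)·p^{i-2} for 3 ≤ i ≤ n-1. Then for every k-subset I ⊆ [n] with 2 ≤ k ≤ n-1, the values w_τ = Σ_{i=1}^k M_{i, j_{τ(i)}} (where I = {j_1 < ... < j_k}) are pairwise distinct as τ ranges over S_k. -/
/-!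
Reduced modulo `p`, the weight `w_τ` only sees row `2` of `M`, i.e. `c · (σ(j_{τ(2)}) + 1)`;
since `p` is a prime not dividing `c` and `σ(j) + 1 ≤ n < p`, this determines `τ(2)`.
What remains, divided by `p`, is a number written in base `p` with the digits
`n + 1 - j_{τ(i)} ∈ [1, n]` for `i ≥ 3`, so it determines `τ(i)` for all `i ≥ 3`.
A permutation is determined by its values at all points but one, hence by `w_τ`.
-/

theorem Equiv.Perm.eq_of_apply_eq_of_ne {α : Type*} {τ τ' : Equiv.Perm α} (a : α)
    (h : ∀ x, x ≠ a → τ x = τ' x) : τ = τ' := by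
  ext x
  by_cases hx : x = a
  · subst hx
    by_contra hne
    have hpre : τ'.symm (τ x) ≠ x := fun h' => hne (τ'.symm_apply_eq.mp h')
    exact hpre (τ.injective ((h _ hpre).trans (τ'.apply_symm_apply _)))
  · exact h x hx

theorem Fin.eq_of_sum_mul_pow_eq {b m : ℕ} {d e : Fin m → ℕ} (hd : ∀ i, d i < b)
    (he : ∀ i, e i < b) (h : ∑ i, d i * b ^ (i : ℕ) = ∑ i, e i * b ^ (i : ℕ)) : d = e := by
  have := finFunctionFinEquiv.injective (Fin.ext (by
    simpa only [finFunctionFinEquiv_apply] using h) :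
      finFunctionFinEquiv (fun i => (⟨d i, hd i⟩ : Fin b)) =
        finFunctionFinEquiv (fun i => (⟨e i, he i⟩ : Fin b)))
  exact funext fun i => congrArg Fin.val (congrFun this i)

theorem Nat.eq_and_eq_of_mul_add_mul_eq {p c a b x y : ℕ} (hp : p.Prime) (hc : ¬ p ∣ c)
    (ha : a < p) (hb : b < p) (h : c * a + p * x = c * b + p * y) : a = b ∧ x = y := by
  have hmod : c * a ≡ c * b [MOD p] := by
    simpa only [Nat.ModEq, Nat.add_mul_mod_self_left] using congrArg (· % p) h
  have hab : a = b :=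
    ((hmod.cancel_left_of_coprime ((hp.coprime_iff_not_dvd).mpr hc)).eq_of_lt_of_lt ha hb)
  subst hab
  exact ⟨rfl, Nat.eq_of_mul_eq_mul_left hp.pos (by omega)⟩

/-- The matrix `M` of the paper, with rows and columns indexed from `0`. -/
def weightMatrix (n p c : ℕ) (σ : Equiv.Perm (Fin n)) (i : Fin (n - 1)) (j : Fin n) : ℤ :=
  if (i : ℕ) = 0 then 0
  else if (i : ℕ) = 1 then (c : ℤ) * ((σ j : ℕ) + 1)
  else ((n : ℤ) - (j : ℕ)) * (p : ℤ) ^ ((i : ℕ) - 1)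

theorem sum_weightMatrix {n p c m : ℕ} (σ : Equiv.Perm (Fin n)) (hk : m + 2 ≤ n - 1)
    (f : Fin (m + 2) → Fin n) :
    ∑ i, weightMatrix n p c σ (Fin.castLE hk i) (f i) =
      ((c * ((σ (f 1) : ℕ) + 1) + p * ∑ j : Fin m, (n - f j.succ.succ) * p ^ (j : ℕ) : ℕ) : ℤ) := by
  rw [Fin.sum_univ_succ, Fin.sum_univ_succ, Finset.mul_sum]
  push_cast
  simp only [weightMatrix, Fin.val_castLE, Fin.val_zero, Fin.val_succ,
    if_true, if_false, Nat.add_eq_zero_iff, one_ne_zero, and_false, zero_add,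
    Nat.add_eq_right, Nat.add_sub_cancel]
  congr 1
  refine Finset.sum_congr rfl fun j _ => ?_
  rw [Nat.cast_sub (f _).is_lt.le, pow_succ]
  ring

theorem stmt_5_general (n p c k : ℕ) (hp : p.Prime) (hpn : n + 1 ≤ p)
    (hc1 : 1 ≤ c) (hcp : c ≤ p - 1) (σ : Equiv.Perm (Fin n))
    (M : Fin (n - 1) → Fin n → ℤ)
    (hM : ∀ i j, M i j =
      if (i : ℕ) = 0 then 0
      else if (i : ℕ) = 1 then (c : ℤ) * ((σ j : ℕ) + 1)
      else ((n : ℤ) - (j : ℕ)) * (p : ℤ) ^ ((i : ℕ) - 1))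
    (hk2 : 2 ≤ k) (hk : k ≤ n - 1) (ι : Fin k → Fin n) (hι : StrictMono ι) :
    Function.Injective
      (fun τ : Equiv.Perm (Fin k) => ∑ i, M (Fin.castLE hk i) (ι (τ i))) := by
  obtain rfl : M = weightMatrix n p c σ := funext₂ hM
  obtain ⟨m, rfl⟩ : ∃ m, k = m + 2 := ⟨k - 2, by omega⟩
  intro τ τ' h
  simp only [sum_weightMatrix, Nat.cast_inj] at h
  obtain ⟨hrow, hdigits⟩ := Nat.eq_and_eq_of_mul_add_mul_eq hp
    (Nat.not_dvd_of_pos_of_lt (by omega) (by omega)) (by omega) (by omega) h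
  have hdigit := Fin.eq_of_sum_mul_pow_eq (fun j => by omega) (fun j => by omega) hdigits
  refine Equiv.Perm.eq_of_apply_eq_of_ne 0 fun i hi => ?_
  obtain ⟨i, rfl⟩ := Fin.exists_succ_eq.mpr hi
  apply hι.injective
  rcases Fin.eq_zero_or_eq_succ i with rfl | ⟨j, rfl⟩
  · exact σ.injective (Fin.ext (by simpa using hrow))
  · have := congrFun hdigit j
    exact Fin.ext (by omega)

/-- For the weight matrix `M_c^σ` (rows and columns written `0`-indexed: row `0` is zero,
row `1` is `c·σ(j)`, and row `i ≥ 2` is `(n + 1 - j')·p^(i'-2)` in `1`-indexed terms),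
the weights `w_τ = ∑ᵢ M_{i, j_{τ(i)}}` of the permutations `τ ∈ S_k` on a fixed
`k`-subset `I = {j₁ < … < j_k}` of `[n]` are pairwise distinct. -/
theorem stmt_5 (n p c k : ℕ) (hn : 2 ≤ n) (hp : p.Prime) (hpn : n + 1 ≤ p)
    (hc1 : 1 ≤ c) (hcp : c ≤ p - 1) (σ : Equiv.Perm (Fin n))
    (M : Fin (n - 1) → Fin n → ℤ)
    (hM : ∀ i j, M i j =
      if (i : ℕ) = 0 then 0
      else if (i : ℕ) = 1 then (c : ℤ) * ((σ j : ℕ) + 1)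
      else ((n : ℤ) - (j : ℕ)) * (p : ℤ) ^ ((i : ℕ) - 1))
    (hk2 : 2 ≤ k) (hk : k ≤ n - 1) (ι : Fin k → Fin n) (hι : StrictMono ι) :
    Function.Injective
      (fun τ : Equiv.Perm (Fin k) => ∑ i, M (Fin.castLE hk i) (ι (τ i))) :=
  stmt_5_general n p c k hp hpn hc1 hcp σ M hM hk2 hk ι hι
end

section
/- Let σ ∈ S_n avoid the patterns 1423, 4123, 1324, and 3124. Let μ = max{i : σ(i) > n+1−i}, ℓ = σ(μ)−1, and suppose σ^{-1}(ℓ) < μ. Then τ = (ℓ, ℓ+1)∘σ also avoids the patterns 1423, 4123, 1324, and 3124. -/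
/-- `σ` contains the pattern `π` (given by its `0`-indexed one-line notation
`π : Fin 4 → Fin 4`) if some increasing sequence of four indices carries the same
relative order of values as `π`. -/
def ContainsPattern {n : ℕ} (σ : Equiv.Perm (Fin n)) (π : Fin 4 → Fin 4) : Prop :=
  ∃ f : Fin 4 → Fin n, StrictMono f ∧ ∀ p q : Fin 4, σ (f p) < σ (f q) ↔ π p < π q

def pat1423 : Fin 4 → Fin 4 := ![0, 3, 1, 2]
def pat4123 : Fin 4 → Fin 4 := ![3, 0, 1, 2]
def pat1324 : Fin 4 → Fin 4 := ![0, 2, 1, 3]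
def pat3124 : Fin 4 → Fin 4 := ![2, 0, 1, 3]

/-- The "bad configuration" common to the four patterns: indices `i<j<k<l` with
`σ k < σ l` and `σ k` strictly between `σ i` and `σ j`. -/
def Bad {n : ℕ} (σ : Equiv.Perm (Fin n)) : Prop :=
  ∃ i j k l : Fin n, i < j ∧ j < k ∧ k < l ∧ σ k < σ l ∧
    ((σ i < σ k ∧ σ k < σ j) ∨ (σ j < σ k ∧ σ k < σ i))

lemma fin4_strictMono {n : ℕ} (i j k l : Fin n) (h1 : i < j) (h2 : j < k) (h3 : k < l) :
    StrictMono ![i, j, k, l] := by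
  intro p q hpq
  fin_cases p <;> fin_cases q <;> simp_all <;>
    first
      | exact h1 | exact h2 | exact h3
      | exact h1.trans h2 | exact h2.trans h3
      | exact (h1.trans h2).trans h3

lemma cp_intro {n : ℕ} (σ : Equiv.Perm (Fin n)) (π : Fin 4 → Fin 4)
    (hπ : Function.Injective π)
    (i j k l : Fin n) (hij : i < j) (hjk : j < k) (hkl : k < l)
    (e01 : σ i < σ j ↔ π 0 < π 1) (e02 : σ i < σ k ↔ π 0 < π 2)
    (e03 : σ i < σ l ↔ π 0 < π 3) (e12 : σ j < σ k ↔ π 1 < π 2)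
    (e13 : σ j < σ l ↔ π 1 < π 3) (e23 : σ k < σ l ↔ π 2 < π 3) :
    ContainsPattern σ π := by
  have hmono := fin4_strictMono i j k l hij hjk hkl
  refine ⟨![i, j, k, l], hmono, ?_⟩
  have hinj : ∀ p q : Fin 4, p ≠ q → σ (![i,j,k,l] p) ≠ σ (![i,j,k,l] q) :=
    fun p q hpq h => hpq (hmono.injective (σ.injective h))
  have flip : ∀ {x y : Fin n} {u v : Fin 4},
      (σ x < σ y ↔ u < v) → σ x ≠ σ y → u ≠ v → (σ y < σ x ↔ v < u) := by
    intro x y u v h hne1 hne2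
    constructor
    · intro hlt
      rcases lt_trichotomy u v with h' | h' | h'
      · exact absurd (h.mpr h') (lt_asymm hlt)
      · exact absurd h' hne2
      · exact h'
    · intro hlt
      rcases lt_trichotomy (σ x) (σ y) with h' | h' | h'
      · exact absurd (h.mp h') (lt_asymm hlt)
      · exact absurd h' hne1
      · exact h'
  intro p q
  fin_cases p <;> fin_cases q <;>
    first
    | exact iff_of_false (lt_irrefl _) (lt_irrefl _)
    | exact e01 | exact e02 | exact e03 | exact e12 | exact e13 | exact e23
    | exact flip e01 (hinj _ _ (by decide)) (hπ.ne (by decide))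
    | exact flip e02 (hinj _ _ (by decide)) (hπ.ne (by decide))
    | exact flip e03 (hinj _ _ (by decide)) (hπ.ne (by decide))
    | exact flip e12 (hinj _ _ (by decide)) (hπ.ne (by decide))
    | exact flip e13 (hinj _ _ (by decide)) (hπ.ne (by decide))
    | exact flip e23 (hinj _ _ (by decide)) (hπ.ne (by decide))

lemma bad_to_cp {n : ℕ} (σ : Equiv.Perm (Fin n)) (hb : Bad σ) :
    ContainsPattern σ pat1423 ∨ ContainsPattern σ pat4123 ∨
    ContainsPattern σ pat1324 ∨ ContainsPattern σ pat3124 := by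
  obtain ⟨i, j, k, l, hij, hjk, hkl, hv, hstr⟩ := hb
  rcases hstr with ⟨ha, hb'⟩ | ⟨ha, hb'⟩
  · -- σ i < σ k < σ j, σ k < σ l
    have hjl : σ j ≠ σ l := fun h => (hjk.trans hkl).ne (σ.injective h)
    rcases hjl.lt_or_gt with h | h
    · -- σ i < σ k < σ j < σ l : pattern 1324
      refine Or.inr (Or.inr (Or.inl (cp_intro σ pat1324 (by decide) i j k l hij hjk hkl
        (iff_of_true (ha.trans hb') (by decide)) (iff_of_true ha (by decide))
        (iff_of_true (ha.trans (hb'.trans h)) (by decide))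
        (iff_of_false (lt_asymm hb') (by decide))
        (iff_of_true h (by decide)) (iff_of_true (hb'.trans h) (by decide)))))
    · -- σ i < σ k < σ l < σ j : pattern 1423
      refine Or.inl (cp_intro σ pat1423 (by decide) i j k l hij hjk hkl
        (iff_of_true (ha.trans hb') (by decide)) (iff_of_true ha (by decide))
        (iff_of_true (ha.trans hv) (by decide))
        (iff_of_false (lt_asymm hb') (by decide))
        (iff_of_false (lt_asymm h) (by decide)) (iff_of_true hv (by decide)))
  · -- σ j < σ k < σ i, σ k < σ l
    have hil : σ i ≠ σ l := fun h => ((hij.trans hjk).trans hkl).ne (σ.injective h)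
    rcases hil.lt_or_gt with h | h
    · -- σ j < σ k < σ i < σ l : pattern 3124
      refine Or.inr (Or.inr (Or.inr (cp_intro σ pat3124 (by decide) i j k l hij hjk hkl
        (iff_of_false (lt_asymm (ha.trans hb')) (by decide))
        (iff_of_false (lt_asymm hb') (by decide))
        (iff_of_true h (by decide)) (iff_of_true ha (by decide))
        (iff_of_true (ha.trans (hb'.trans h)) (by decide))
        (iff_of_true hv (by decide)))))
    · -- σ j < σ k < σ l < σ i : pattern 4123
      refine Or.inr (Or.inl (cp_intro σ pat4123 (by decide) i j k l hij hjk hkl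
        (iff_of_false (lt_asymm (ha.trans hb')) (by decide))
        (iff_of_false (lt_asymm hb') (by decide))
        (iff_of_false (lt_asymm h) (by decide)) (iff_of_true ha (by decide))
        (iff_of_true (ha.trans hv) (by decide)) (iff_of_true hv (by decide))))

lemma cp_bad_1423 {n : ℕ} (σ : Equiv.Perm (Fin n)) (h : ContainsPattern σ pat1423) : Bad σ := by
  obtain ⟨f, hmono, hf⟩ := h
  exact ⟨f 0, f 1, f 2, f 3, hmono (by decide), hmono (by decide), hmono (by decide),
    (hf 2 3).mpr (by decide), Or.inl ⟨(hf 0 2).mpr (by decide), (hf 2 1).mpr (by decide)⟩⟩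

lemma cp_bad_4123 {n : ℕ} (σ : Equiv.Perm (Fin n)) (h : ContainsPattern σ pat4123) : Bad σ := by
  obtain ⟨f, hmono, hf⟩ := h
  exact ⟨f 0, f 1, f 2, f 3, hmono (by decide), hmono (by decide), hmono (by decide),
    (hf 2 3).mpr (by decide), Or.inr ⟨(hf 1 2).mpr (by decide), (hf 2 0).mpr (by decide)⟩⟩

lemma cp_bad_1324 {n : ℕ} (σ : Equiv.Perm (Fin n)) (h : ContainsPattern σ pat1324) : Bad σ := by
  obtain ⟨f, hmono, hf⟩ := h
  exact ⟨f 0, f 1, f 2, f 3, hmono (by decide), hmono (by decide), hmono (by decide),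
    (hf 2 3).mpr (by decide), Or.inl ⟨(hf 0 2).mpr (by decide), (hf 2 1).mpr (by decide)⟩⟩

lemma cp_bad_3124 {n : ℕ} (σ : Equiv.Perm (Fin n)) (h : ContainsPattern σ pat3124) : Bad σ := by
  obtain ⟨f, hmono, hf⟩ := h
  exact ⟨f 0, f 1, f 2, f 3, hmono (by decide), hmono (by decide), hmono (by decide),
    (hf 2 3).mpr (by decide), Or.inr ⟨(hf 1 2).mpr (by decide), (hf 2 0).mpr (by decide)⟩⟩

set_option maxHeartbeats 4000000 in
/-- If `σ` avoids the patterns `1423, 4123, 1324, 3124`, `μ` is the largest index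
with `σ(μ) > n + 1 - μ` (`0`-indexed: `n < σ(μ) + μ + 1`), `ℓ = σ(μ) - 1`
(as a value: `ℓ + 1 = σ(μ)`), and `σ⁻¹(ℓ) < μ`, then `τ = (ℓ, ℓ+1) ∘ σ`
(swapping the values `ℓ` and `ℓ+1 = σ(μ)`) also avoids these four patterns. -/
theorem stmt_10 (n : ℕ) (σ : Equiv.Perm (Fin n))
    (h1 : ¬ ContainsPattern σ pat1423) (h2 : ¬ ContainsPattern σ pat4123)
    (h3 : ¬ ContainsPattern σ pat1324) (h4 : ¬ ContainsPattern σ pat3124)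
    (μ : Fin n) (hμ : n < (σ μ : ℕ) + (μ : ℕ) + 1)
    (hmax : ∀ i : Fin n, n < (σ i : ℕ) + (i : ℕ) + 1 → i ≤ μ)
    (ℓ : Fin n) (hℓ : (ℓ : ℕ) + 1 = (σ μ : ℕ))
    (hlam : σ.symm ℓ < μ) :
    ¬ ContainsPattern (Equiv.swap ℓ (σ μ) * σ) pat1423 ∧
    ¬ ContainsPattern (Equiv.swap ℓ (σ μ) * σ) pat4123 ∧
    ¬ ContainsPattern (Equiv.swap ℓ (σ μ) * σ) pat1324 ∧
    ¬ ContainsPattern (Equiv.swap ℓ (σ μ) * σ) pat3124 := by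
  have hbσ : ¬ Bad σ := by
    intro hb
    rcases bad_to_cp σ hb with h | h | h | h
    exacts [h1 h, h2 h, h3 h, h4 h]
  have hbτ : ¬ Bad (Equiv.swap ℓ (σ μ) * σ) := by
    intro hb
    obtain ⟨i, j, k, l, hij, hjk, hkl, hv, hstr⟩ := hb
    set τ : Equiv.Perm (Fin n) := Equiv.swap ℓ (σ μ) * σ with hτdef
    set a : Fin n := σ.symm ℓ with hadef
    have ha : σ a = ℓ := σ.apply_symm_apply ℓ
    have naμ : (a : ℕ) < (μ : ℕ) := hlam
    have happ : ∀ z, τ z = Equiv.swap ℓ (σ μ) (σ z) := fun z => rfl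
    have spec : ∀ z : Fin n,
        ((τ z : ℕ) = (ℓ : ℕ) + 1 ∧ (σ z : ℕ) = (ℓ : ℕ) ∧ (z : ℕ) = (a : ℕ)) ∨
        ((τ z : ℕ) = (ℓ : ℕ) ∧ (σ z : ℕ) = (ℓ : ℕ) + 1 ∧ (z : ℕ) = (μ : ℕ)) ∨
        ((τ z : ℕ) = (σ z : ℕ) ∧ (σ z : ℕ) ≠ (ℓ : ℕ) ∧ (σ z : ℕ) ≠ (ℓ : ℕ) + 1) := by
      intro z
      rcases eq_or_ne z a with hz | hza
      · left
        have hsz : σ z = ℓ := by rw [hz, ha]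
        have ht : τ z = σ μ := by rw [happ z, hsz, Equiv.swap_apply_left]
        exact ⟨by rw [ht, ← hℓ], by rw [hsz], by rw [hz]⟩
      · rcases eq_or_ne z μ with hz | hzμ
        · right; left
          have hsz : σ z = σ μ := by rw [hz]
          have ht : τ z = ℓ := by rw [happ z, hsz, Equiv.swap_apply_right]
          exact ⟨by rw [ht], by rw [hsz, ← hℓ], by rw [hz]⟩
        · right; right
          have hz1 : σ z ≠ ℓ := fun h => hza (σ.injective (h.trans ha.symm))
          have hz2 : σ z ≠ σ μ := fun h => hzμ (σ.injective h)
          have ht : τ z = σ z := by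
            rw [happ z]; exact Equiv.swap_apply_of_ne_of_ne hz1 hz2
          exact ⟨by rw [ht], fun h => hz1 (Fin.ext h), fun h => hz2 (Fin.ext (h.trans hℓ))⟩
    have L : ∀ x : Fin n, (μ : ℕ) < (x : ℕ) → (σ x : ℕ) < (ℓ : ℕ) := by
      intro x hx
      have h6 : ¬ n < (σ x : ℕ) + (x : ℕ) + 1 :=
        fun hc => absurd (Fin.le_def.mp (hmax x hc)) (by omega)
      omega
    have hLl : (l : ℕ) ≤ (μ : ℕ) ∨ (σ l : ℕ) < (ℓ : ℕ) := by
      rcases Nat.lt_or_ge (μ : ℕ) (l : ℕ) with h | h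
      · exact Or.inr (L l h)
      · exact Or.inl h
    have nhij : (i : ℕ) < (j : ℕ) := hij
    have nhjk : (j : ℕ) < (k : ℕ) := hjk
    have nhkl : (k : ℕ) < (l : ℕ) := hkl
    have nv : (τ k : ℕ) < (τ l : ℕ) := hv
    have si := spec i
    have sj := spec j
    have sk := spec k
    have sl := spec l
    rcases hstr with ⟨s1, s2⟩ | ⟨s1, s2⟩ <;>
      [(have ns1 : (τ i : ℕ) < (τ k : ℕ) := s1; have ns2 : (τ k : ℕ) < (τ j : ℕ) := s2);
       (have ns1 : (τ j : ℕ) < (τ k : ℕ) := s1; have ns2 : (τ k : ℕ) < (τ i : ℕ) := s2)] <;>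
    rcases si with ⟨e1, e2, e3⟩ | ⟨e1, e2, e3⟩ | ⟨e1, e2, e3⟩ <;>
    rcases sj with ⟨f1, f2, f3⟩ | ⟨f1, f2, f3⟩ | ⟨f1, f2, f3⟩ <;>
    rcases sk with ⟨g1, g2, g3⟩ | ⟨g1, g2, g3⟩ | ⟨g1, g2, g3⟩ <;>
    rcases sl with ⟨m1, m2, m3⟩ | ⟨m1, m2, m3⟩ | ⟨m1, m2, m3⟩ <;>
    rcases hLl with hL | hL <;>
      first
      | omega
      | exact hbσ ⟨i, j, k, l, hij, hjk, hkl, Fin.lt_def.mpr (by omega),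
          Or.inl ⟨Fin.lt_def.mpr (by omega), Fin.lt_def.mpr (by omega)⟩⟩
      | exact hbσ ⟨i, j, k, l, hij, hjk, hkl, Fin.lt_def.mpr (by omega),
          Or.inr ⟨Fin.lt_def.mpr (by omega), Fin.lt_def.mpr (by omega)⟩⟩
  exact ⟨fun h => hbτ (cp_bad_1423 _ h), fun h => hbτ (cp_bad_4123 _ h),
    fun h => hbτ (cp_bad_1324 _ h), fun h => hbτ (cp_bad_3124 _ h)⟩
end

section
/- The permutation σ = (ℓ, ℓ−1, ..., 1, n, n−1, ..., ℓ+1) ∈ S_n (a 2-block descending permutation, first listing ℓ, ℓ−1, ..., 1 then n, n−1, ..., ℓ+1) avoids the four patterns 4123, 3124, 1423, and 1324, for every ℓ ∈ {0, 1, ..., n-1}. -/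
lemma two_block_step (n ℓ : ℕ) (σ : Equiv.Perm (Fin n))
    (hσ : ∀ i : Fin n, (σ i : ℕ) =
      if (i : ℕ) < ℓ then ℓ - 1 - (i : ℕ) else n - 1 - (i : ℕ) + ℓ)
    (i j : Fin n) (hij : i < j) (hs : σ i < σ j) :
    (i : ℕ) < ℓ ∧ ¬ (j : ℕ) < ℓ := by
  have h1 := hσ i
  have h2 := hσ j
  have hij' : (i : ℕ) < (j : ℕ) := hij
  have hs' : (σ i : ℕ) < (σ j : ℕ) := hs
  have hjn : (j : ℕ) < n := j.isLt
  by_cases hi : (i : ℕ) < ℓ <;> by_cases hj : (j : ℕ) < ℓ <;>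
    simp [hi, hj] at h1 h2 <;> omega

lemma no_incr3 (n ℓ : ℕ) (σ : Equiv.Perm (Fin n))
    (hσ : ∀ i : Fin n, (σ i : ℕ) =
      if (i : ℕ) < ℓ then ℓ - 1 - (i : ℕ) else n - 1 - (i : ℕ) + ℓ)
    (i j k : Fin n) (hij : i < j) (hjk : j < k)
    (h1 : σ i < σ j) (h2 : σ j < σ k) : False := by
  have A := two_block_step n ℓ σ hσ i j hij h1
  have B := two_block_step n ℓ σ hσ j k hjk h2
  exact A.2 B.1

/-- The `2`-block descending permutation with one-line notation
`(ℓ, ℓ-1, …, 1, n, n-1, …, ℓ+1)` (written `0`-indexed below) avoids the patterns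
`4123`, `3124`, `1423` and `1324`, for every `ℓ ∈ {0, 1, …, n-1}`. -/
theorem stmt_12 (n ℓ : ℕ) (hℓ : ℓ ≤ n - 1) (σ : Equiv.Perm (Fin n))
    (hσ : ∀ i : Fin n, (σ i : ℕ) =
      if (i : ℕ) < ℓ then ℓ - 1 - (i : ℕ) else n - 1 - (i : ℕ) + ℓ) :
    ¬ ContainsPattern σ pat4123 ∧ ¬ ContainsPattern σ pat3124 ∧
    ¬ ContainsPattern σ pat1423 ∧ ¬ ContainsPattern σ pat1324 := by
  refine ⟨?_, ?_, ?_, ?_⟩ <;> rintro ⟨f, hf, hvals⟩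
  · exact no_incr3 n ℓ σ hσ (f 1) (f 2) (f 3) (hf (by decide)) (hf (by decide))
      ((hvals 1 2).2 (by decide)) ((hvals 2 3).2 (by decide))
  · exact no_incr3 n ℓ σ hσ (f 1) (f 2) (f 3) (hf (by decide)) (hf (by decide))
      ((hvals 1 2).2 (by decide)) ((hvals 2 3).2 (by decide))
  · exact no_incr3 n ℓ σ hσ (f 0) (f 2) (f 3) (hf (by decide)) (hf (by decide))
      ((hvals 0 2).2 (by decide)) ((hvals 2 3).2 (by decide))
  · exact no_incr3 n ℓ σ hσ (f 0) (f 2) (f 3) (hf (by decide)) (hf (by decide))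
      ((hvals 0 2).2 (by decide)) ((hvals 2 3).2 (by decide))
end

section
/- Let B^σ be the matching field for Gr(k,n) induced by σ ∈ S_n: for I = {p < q < i_3 < ... < i_k}, B^σ(I) = id if σ(p) > σ(q) or k = 1, and B^σ(I) = (12) otherwise. The vertex of the matching field polytope corresponding to I is v_I = Σ_{a=1}^k e_{a, j_a} where (j_1, j_2) = (p, q) if σ(p) > σ(q), (j_1, j_2) = (q, p) otherwise, and j_a = i_a for a ≥ 3. Fix ℓ ∈ [n-1], λ = σ^{-1}(ℓ), μ = σ^{-1}(ℓ+1), λ < μ. Define f ∈ ℝ^{(n-1)×n} by f_{1,j} = 1 if σ(j) > ℓ+1, f_{2,j} = −1 if σ(j) ≥ ℓ, and 0 otherwise. Then for every k-subset I ⊆ [n] with k ≥ 2: ⟨f, v_I⟩ ∈ {−1, 0, 1}; moreover ⟨f, v_I⟩ = −1 if and only if the two smallest elements of I are {λ, μ}, and ⟨f, v_I⟩ = 1 if and only if I = {j_1, j_2 < j_3 < ... < j_k} with σ(j_1) > ℓ+1 and σ(j_2) < ℓ. -/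
/-- The vertex of the matching field polytope of `B^σ` for `Gr(k+2, n)` indexed by the
`(k+2)`-subset `I` given by the strictly increasing map `ι : Fin (k+2) → Fin n`
(rows written `0`-indexed: row `0` has a `1` in the column of the element of the two
smallest elements of `I` with larger `σ`-value, row `1` in the column of the other,
and row `a ≥ 2` in column `ι a`). -/
noncomputable def vtx {n k : ℕ} (σ : Equiv.Perm (Fin n)) (ι : Fin (k + 2) → Fin n) :
    ℕ → Fin n → ℝ := fun a j =>
  if a = 0 then (if (if σ (ι 1) < σ (ι 0) then ι 0 else ι 1) = j then 1 else 0)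
  else if a = 1 then (if (if σ (ι 1) < σ (ι 0) then ι 1 else ι 0) = j then 1 else 0)
  else if h : a < k + 2 then (if ι ⟨a, h⟩ = j then 1 else 0) else 0

/-- With `λ = σ⁻¹(ℓ) < μ = σ⁻¹(ℓ+1)` (encoded by `σ(μ) = σ(λ) + 1`) and `f` the vector
with `f_{1,j} = 1` if `σ(j) > ℓ+1` (i.e. `σ(j) > σ(μ)`), `f_{2,j} = -1` if `σ(j) ≥ ℓ`
(i.e. `σ(j) ≥ σ(λ)`), for every `k`-subset `I` with `k ≥ 2` the pairing `⟨f, v_I⟩` lies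
in `{-1, 0, 1}`; it equals `-1` iff the two smallest elements of `I` are `λ, μ`, and
`1` iff the two smallest elements `j₁, j₂` of `I` satisfy `σ(j₁) > ℓ+1` and
`σ(j₂) < ℓ` (where `σ(j₁) > σ(j₂)`). -/
theorem stmt_13 (n k : ℕ) (hk : k + 2 ≤ n - 1) (σ : Equiv.Perm (Fin n))
    (lam mu : Fin n) (hlm : lam < mu) (hcons : (σ mu : ℕ) = (σ lam : ℕ) + 1)
    (f : ℕ → Fin n → ℝ)
    (hf : ∀ a j, f a j =
      if a = 0 ∧ σ mu < σ j then 1 else if a = 1 ∧ σ lam ≤ σ j then -1 else 0)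
    (ι : Fin (k + 2) → Fin n) (hι : StrictMono ι) :
    (∑ a ∈ Finset.range (n - 1), ∑ j, f a j * vtx σ ι a j = -1 ∨
      ∑ a ∈ Finset.range (n - 1), ∑ j, f a j * vtx σ ι a j = 0 ∨
      ∑ a ∈ Finset.range (n - 1), ∑ j, f a j * vtx σ ι a j = 1) ∧
    (∑ a ∈ Finset.range (n - 1), ∑ j, f a j * vtx σ ι a j = -1 ↔
      ι 0 = lam ∧ ι 1 = mu) ∧
    (∑ a ∈ Finset.range (n - 1), ∑ j, f a j * vtx σ ι a j = 1 ↔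
      σ mu < max (σ (ι 0)) (σ (ι 1)) ∧ min (σ (ι 0)) (σ (ι 1)) < σ lam) := by

  have h01 : (0 : Fin (k + 2)) < 1 := by
    rw [Fin.lt_def]; simp
  have hne : ι 0 ≠ ι 1 := (hι h01).ne
  have hsne : σ (ι 0) ≠ σ (ι 1) := fun h => hne (σ.injective h)
  set c0 : Fin n := (if σ (ι 1) < σ (ι 0) then ι 0 else ι 1) with hc0
  set c1 : Fin n := (if σ (ι 1) < σ (ι 0) then ι 1 else ι 0) with hc1
  have hmax : σ c0 = max (σ (ι 0)) (σ (ι 1)) := by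
    rcases lt_or_ge (σ (ι 1)) (σ (ι 0)) with h | h
    · rw [hc0, if_pos h, max_eq_left h.le]
    · rw [hc0, if_neg (not_lt.mpr h), max_eq_right h]
  have hmin : σ c1 = min (σ (ι 0)) (σ (ι 1)) := by
    rcases lt_or_ge (σ (ι 1)) (σ (ι 0)) with h | h
    · rw [hc1, if_pos h, min_eq_right h.le]
    · rw [hc1, if_neg (not_lt.mpr h), min_eq_left h]
  have hBA : σ c1 < σ c0 := by
    rw [hmax, hmin]; exact min_lt_max.mpr hsne
  have hv0 : ∀ j, vtx σ ι 0 j = if c0 = j then (1 : ℝ) else 0 := by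
    intro j; rw [hc0]; simp [vtx]
  have hv1 : ∀ j, vtx σ ι 1 j = if c1 = j then (1 : ℝ) else 0 := by
    intro j; rw [hc1]; simp [vtx]
  have g0 : ∑ j, f 0 j * vtx σ ι 0 j = if σ mu < σ c0 then (1 : ℝ) else 0 := by
    simp only [hv0, mul_ite, mul_one, mul_zero]
    rw [Finset.sum_ite_eq]
    simp [hf]
  have g1 : ∑ j, f 1 j * vtx σ ι 1 j = if σ lam ≤ σ c1 then (-1 : ℝ) else 0 := by
    simp only [hv1, mul_ite, mul_one, mul_zero]
    rw [Finset.sum_ite_eq]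
    simp [hf]
  have hsub : ({0, 1} : Finset ℕ) ⊆ Finset.range (n - 1) := by
    intro x hx
    simp only [Finset.mem_insert, Finset.mem_singleton] at hx
    rcases hx with h | h <;> simp [h] <;> omega
  have hS : ∑ a ∈ Finset.range (n - 1), ∑ j, f a j * vtx σ ι a j
      = (if σ mu < σ c0 then (1 : ℝ) else 0) + (if σ lam ≤ σ c1 then (-1 : ℝ) else 0) := by
    rw [← Finset.sum_subset hsub]
    · rw [Finset.sum_pair (by norm_num : (0 : ℕ) ≠ 1), g0, g1]
    · intro a _ ha
      simp only [Finset.mem_insert, Finset.mem_singleton, not_or] at ha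
      have : ∀ j, f a j = 0 := by
        intro j; rw [hf]; simp [ha.1, ha.2]
      simp [this]
  have hfwd : ι 0 = lam ∧ ι 1 = mu → c0 = mu ∧ c1 = lam := by
    rintro ⟨h0, h1⟩
    have hnl : ¬ σ (ι 1) < σ (ι 0) := by
      rw [h0, h1, Fin.lt_def]; omega
    rw [hc0, hc1, if_neg hnl, if_neg hnl]
    exact ⟨h1, h0⟩
  have hbwd : ¬ σ mu < σ c0 → σ lam ≤ σ c1 → ι 0 = lam ∧ ι 1 = mu := by
    intro hA hB
    rw [Fin.lt_def, not_lt] at hA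
    rw [Fin.le_def] at hB
    rw [Fin.lt_def] at hBA
    have hA' : σ c0 = σ mu := Fin.val_injective (by omega)
    have hB' : σ c1 = σ lam := Fin.val_injective (by omega)
    have hc0m : c0 = mu := σ.injective hA'
    have hc1l : c1 = lam := σ.injective hB'
    by_cases hlt : σ (ι 1) < σ (ι 0)
    · rw [hc0, if_pos hlt] at hc0m
      rw [hc1, if_pos hlt] at hc1l
      exact absurd (hc0m ▸ hc1l ▸ hι h01) (not_lt.mpr hlm.le)
    · rw [hc0, if_neg hlt] at hc0m
      rw [hc1, if_neg hlt] at hc1l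
      exact ⟨hc1l, hc0m⟩
  rw [hS, ← hmax, ← hmin]
  by_cases h1 : σ mu < σ c0 <;> by_cases h2 : σ lam ≤ σ c1
  · rw [if_pos h1, if_pos h2]
    refine ⟨Or.inr (Or.inl (by norm_num)), ?_, ?_⟩
    · constructor
      · intro h; exact absurd h (by norm_num)
      · intro h
        obtain ⟨hm, -⟩ := hfwd h
        exact absurd (hm ▸ h1) (lt_irrefl _)
    · constructor
      · intro h; exact absurd h (by norm_num)
      · rintro ⟨-, hb⟩
        exact absurd hb (not_lt.mpr h2)
  · rw [if_pos h1, if_neg h2]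
    refine ⟨Or.inr (Or.inr (by norm_num)), ?_, ?_⟩
    · constructor
      · intro h; exact absurd h (by norm_num)
      · intro h
        obtain ⟨-, hl⟩ := hfwd h
        exact absurd (hl ▸ le_refl (σ lam)) (by rw [← hl] at h2; exact h2)
    · constructor
      · intro _; exact ⟨h1, not_le.mp h2⟩
      · intro _; norm_num
  · rw [if_neg h1, if_pos h2]
    refine ⟨Or.inl (by norm_num), ?_, ?_⟩
    · constructor
      · intro _; exact hbwd h1 h2
      · intro _; norm_num
    · constructor
      · intro h; exact absurd h (by norm_num)
      · rintro ⟨ha, -⟩; exact absurd ha h1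
  · rw [if_neg h1, if_neg h2]
    refine ⟨Or.inr (Or.inl (by norm_num)), ?_, ?_⟩
    · constructor
      · intro h; exact absurd h (by norm_num)
      · intro h
        obtain ⟨-, hl⟩ := hfwd h
        exact absurd (hl ▸ le_refl (σ lam)) (by rw [← hl] at h2; exact h2)
    · constructor
      · intro h; exact absurd h (by norm_num)
      · rintro ⟨ha, -⟩; exact absurd ha h1
end
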